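/- arXiv:2502.05162 — 6 statements merged into one kernel-verified Lean document; each statement's English description precedes it below -/
import Mathlib

section
/- For every positive integer k there exists a positive integer n such that every k-coloring of the n×n grid contains a monochromatic L; that is, there exist positive integers x, y, d with x+d ≤ n and y+d ≤ n such that the points (x,y), (x+d,y), (x+d,y+d) all receive the same color. -/
/-- A `k`-coloring `χ` of the `n × n` grid (points `(i,j)` with `1 ≤ i, j ≤ n`)
contains a monochromatic L: there are positive integers `x, y, d` with
`x + d ≤ n` and `y + d ≤ n` such that `(x,y)`, `(x+d,y)`, `(x+d,y+d)` all
receive the same color. -/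
def HasMonoL (n : ℕ) {k : ℕ} (χ : ℕ × ℕ → Fin k) : Prop :=
  ∃ x y d : ℕ, 0 < x ∧ 0 < y ∧ 0 < d ∧ x + d ≤ n ∧ y + d ≤ n ∧
    χ (x, y) = χ (x + d, y) ∧ χ (x + d, y) = χ (x + d, y + d)

/-- Any coloring of `ℕ × ℕ` with finitely many colors has a monochromatic L
somewhere (with positive coordinates). -/
lemma infinite_mono_L {k : ℕ} (_hk : 0 < k) (χ : ℕ × ℕ → Fin k) :
    ∃ x y d : ℕ, 0 < x ∧ 0 < y ∧ 0 < d ∧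
      χ (x, y) = χ (x + d, y) ∧ χ (x + d, y) = χ (x + d, y + d) := by
  have := Combinatorics.exists_mono_homothetic_copy
    ({((0 : ℕ), (0 : ℕ)), (1, 0), (1, 1)} : Finset (ℕ × ℕ))
    (fun p : ℕ × ℕ => χ (p.1 + 1, p.2 + 1))
  obtain ⟨a, ha, b, c, hc⟩ := this
  have h0 := hc (0, 0) (by simp)
  have h1 := hc (1, 0) (by simp)
  have h2 := hc (1, 1) (by simp)
  refine ⟨b.1 + 1, b.2 + 1, a, by omega, by omega, ha, ?_, ?_⟩
  · have : χ (b.1 + 1, b.2 + 1) = c := by simpa [Prod.smul_mk] using h0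
    have h1' : χ (a + b.1 + 1, b.2 + 1) = c := by
      simpa [Prod.smul_mk, mul_one, mul_zero] using h1
    rw [this, ← h1']; ring_nf
  · have h1' : χ (a + b.1 + 1, b.2 + 1) = c := by
      simpa [Prod.smul_mk, mul_one, mul_zero] using h1
    have h2' : χ (a + b.1 + 1, a + b.2 + 1) = c := by
      simpa [Prod.smul_mk, mul_one] using h2
    have e1 : b.1 + 1 + a = a + b.1 + 1 := by ring
    have e2 : b.2 + 1 + a = a + b.2 + 1 := by ring
    rw [e1, e2, h1', h2']

/-- For every positive integer `k` there exists a positive integer `n` such that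
every `k`-coloring of the `n × n` grid contains a monochromatic L. -/
theorem exists_grid_size_forcing_mono_L :
    ∀ k : ℕ, 0 < k → ∃ n : ℕ, 0 < n ∧ ∀ χ : ℕ × ℕ → Fin k, HasMonoL n χ := by
  intro k hk
  by_contra h
  push_neg at h
  -- for each n ≥ 1 pick a bad coloring of the (n+1)-grid
  have hbad : ∀ n : ℕ, ∃ χ : ℕ × ℕ → Fin k, ¬ HasMonoL (n + 1) χ := by
    intro n
    exact h (n + 1) (Nat.succ_pos n)
  choose g hg using hbad
  let U : Ultrafilter ℕ := Filter.hyperfilter ℕ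
  -- limit coloring along the ultrafilter
  have hΧ : ∀ p : ℕ × ℕ, ∃ v : Fin k, {n : ℕ | g n p = v} ∈ U := by
    intro p
    obtain ⟨v, hv⟩ := (U.map (fun n => g n p)).eq_pure_of_finite
    refine ⟨v, ?_⟩
    have : {v} ∈ U.map (fun n => g n p) := by rw [hv]; exact Filter.mem_pure.mpr rfl
    exact Ultrafilter.mem_map.mp this
  choose Χ hΧ using hΧ
  obtain ⟨x, y, d, hx, hy, hd, e1, e2⟩ := infinite_mono_L hk Χ
  -- transfer back to some large n
  have hA : {n : ℕ | g n (x, y) = Χ (x, y)} ∈ U := hΧ (x, y)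
  have hB : {n : ℕ | g n (x + d, y) = Χ (x + d, y)} ∈ U := hΧ (x + d, y)
  have hC : {n : ℕ | g n (x + d, y + d) = Χ (x + d, y + d)} ∈ U := hΧ (x + d, y + d)
  have hL : {n : ℕ | x + d ≤ n + 1 ∧ y + d ≤ n + 1} ∈ U := by
    have hcof : {n : ℕ | x + d ≤ n + 1 ∧ y + d ≤ n + 1} ∈ Filter.cofinite := by
      apply Filter.mem_cofinite.mpr
      apply Set.Finite.subset (Set.finite_Iio (x + d + y + d))
      intro n hn
      simp only [Set.mem_compl_iff, Set.mem_setOf_eq, not_and_or, not_le] at hn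
      simp only [Set.mem_Iio]
      omega
    exact (Filter.hyperfilter_le_cofinite) hcof
  have hmem : ({n : ℕ | g n (x, y) = Χ (x, y)} ∩
      {n : ℕ | g n (x + d, y) = Χ (x + d, y)} ∩
      {n : ℕ | g n (x + d, y + d) = Χ (x + d, y + d)} ∩
      {n : ℕ | x + d ≤ n + 1 ∧ y + d ≤ n + 1}) ∈ U :=
    Filter.inter_mem (Filter.inter_mem (Filter.inter_mem hA hB) hC) hL
  obtain ⟨n, hn⟩ := Ultrafilter.nonempty_of_mem hmem
  obtain ⟨⟨⟨ha, hb⟩, hc⟩, hle1, hle2⟩ := hn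
  exact hg n ⟨x, y, d, hx, hy, hd, hle1, hle2,
    by rw [ha, hb]; exact e1, by rw [hb, hc]; exact e2⟩
end

section
/- Every 3-coloring of the 1804×1804 grid contains a monochromatic L; that is, R_3(L) ≤ 1804. -/
/-- `R_k(L)`: the least positive integer `n` such that every `k`-coloring of the
`n × n` grid contains a monochromatic L. -/
noncomputable def RL (k : ℕ) : ℕ :=
  sInf {n : ℕ | 0 < n ∧ ∀ χ : ℕ × ℕ → Fin k, HasMonoL n χ}

lemma fin3_eq : ∀ a b x y : Fin 3, a ≠ b → x ≠ a → x ≠ b → y ≠ a → y ≠ b → x = y := by decide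

lemma fin3_maj (S : Finset ℕ) (f : ℕ → Fin 3) (t : ℕ) (h : 3 * t < S.card) :
    ∃ v, t < (S.filter fun p => f p = v).card := by
  by_contra hcon
  push_neg at hcon
  have hsum : S.card = ∑ v : Fin 3, (S.filter fun p => f p = v).card :=
    Finset.card_eq_sum_card_fiberwise (fun x _ => Finset.mem_univ (f x))
  rw [Fin.sum_univ_three] at hsum
  have h0 := hcon 0; have h1 := hcon 1; have h2 := hcon 2
  omega

lemma fin3_maj2 (S : Finset ℕ) (f : ℕ → Fin 3) (c : Fin 3)
    (hc : ∀ p ∈ S, f p ≠ c) (h : 120 < S.card) :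
    ∃ v, v ≠ c ∧ 60 < (S.filter fun p => f p = v).card := by
  have hsum : S.card = ∑ v : Fin 3, (S.filter fun p => f p = v).card :=
    Finset.card_eq_sum_card_fiberwise (fun x _ => Finset.mem_univ (f x))
  have hcz : (S.filter fun p => f p = c).card = 0 := by
    rw [Finset.card_eq_zero, Finset.filter_eq_empty_iff]
    exact fun x hx => hc x hx
  by_contra hcon
  push_neg at hcon
  have e1 : ∑ v ∈ Finset.univ.erase c, (S.filter fun p => f p = v).card ≤ 120 := by
    calc ∑ v ∈ Finset.univ.erase c, (S.filter fun p => f p = v).card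
        ≤ ∑ v ∈ Finset.univ.erase c, 60 :=
          Finset.sum_le_sum (fun v hv => hcon v (Finset.mem_erase.mp hv).1)
      _ = 120 := by
          rw [Finset.sum_const, smul_eq_mul, Finset.card_erase_of_mem (Finset.mem_univ c),
            Finset.card_univ, Fintype.card_fin]
  have e2 : S.card = (S.filter fun p => f p = c).card
      + ∑ v ∈ Finset.univ.erase c, (S.filter fun p => f p = v).card := by
    rw [hsum]
    exact (Finset.add_sum_erase _ _ (Finset.mem_univ c)).symm
  omega

lemma sum_gap_lb (T : Finset ℕ) (g : ℕ → ℕ) (h1 : ∀ p ∈ T, 1 ≤ g p)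
    (hcard : 601 ≤ T.card) (hf : ∀ v, (T.filter fun p => g p = v).card ≤ 120) :
    1806 ≤ ∑ p ∈ T, g p := by
  have key : ∀ k, 1 ≤ k → k ≤ 6 → 601 - 120 * (k - 1) ≤ (T.filter fun p => k ≤ g p).card := by
    intro k hk1 hk6
    have hneg : (T.filter fun p => ¬ k ≤ g p).card ≤ 120 * (k - 1) := by
      have hsub : (T.filter fun p => ¬ k ≤ g p) ⊆
          (Finset.Icc 1 (k-1)).biUnion (fun v => T.filter fun p => g p = v) := by
        intro p hp
        simp only [Finset.mem_filter, not_le] at hp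
        refine Finset.mem_biUnion.mpr ⟨g p, ?_, ?_⟩
        · exact Finset.mem_Icc.mpr ⟨h1 p hp.1, by omega⟩
        · exact Finset.mem_filter.mpr ⟨hp.1, rfl⟩
      calc (T.filter fun p => ¬ k ≤ g p).card
          ≤ ((Finset.Icc 1 (k-1)).biUnion (fun v => T.filter fun p => g p = v)).card :=
            Finset.card_le_card hsub
        _ ≤ ∑ v ∈ Finset.Icc 1 (k-1), (T.filter fun p => g p = v).card :=
            Finset.card_biUnion_le
        _ ≤ ∑ v ∈ Finset.Icc 1 (k-1), 120 := Finset.sum_le_sum (fun v _ => hf v)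
        _ = 120 * (k - 1) := by rw [Finset.sum_const, smul_eq_mul, Nat.card_Icc]; omega
    have hsplit := Finset.card_filter_add_card_filter_not (s := T)
      (p := fun p => k ≤ g p)
    omega
  have swap : ∑ k ∈ Finset.Icc 1 6, (T.filter fun p => k ≤ g p).card ≤ ∑ p ∈ T, g p := by
    calc ∑ k ∈ Finset.Icc 1 6, (T.filter fun p => k ≤ g p).card
        = ∑ k ∈ Finset.Icc 1 6, ∑ p ∈ T, (if k ≤ g p then 1 else 0) := by
          refine Finset.sum_congr rfl (fun k _ => ?_)
          rw [Finset.card_filter]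
      _ = ∑ p ∈ T, ∑ k ∈ Finset.Icc 1 6, (if k ≤ g p then 1 else 0) := Finset.sum_comm
      _ ≤ ∑ p ∈ T, g p := by
          refine Finset.sum_le_sum (fun p _ => ?_)
          have e : ∑ k ∈ Finset.Icc 1 6, (if k ≤ g p then 1 else 0)
              = ((Finset.Icc 1 6).filter fun k => k ≤ g p).card := (Finset.card_filter _ _).symm
          rw [e]
          have hsub : ((Finset.Icc 1 6).filter fun k => k ≤ g p) ⊆ Finset.Icc 1 (g p) := by
            intro k hk
            simp only [Finset.mem_filter, Finset.mem_Icc] at hk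
            exact Finset.mem_Icc.mpr ⟨hk.1.1, hk.2⟩
          calc ((Finset.Icc 1 6).filter fun k => k ≤ g p).card
              ≤ (Finset.Icc 1 (g p)).card := Finset.card_le_card hsub
            _ = g p := by rw [Nat.card_Icc]; omega
  have final : (1806 : ℕ) ≤ ∑ k ∈ Finset.Icc 1 6, (T.filter fun p => k ≤ g p).card := by
    have h2 : ∑ k ∈ Finset.Icc 1 6, (601 - 120 * (k - 1))
        ≤ ∑ k ∈ Finset.Icc 1 6, (T.filter fun p => k ≤ g p).card := by
      refine Finset.sum_le_sum (fun k hk => ?_)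
      have hk' := Finset.mem_Icc.mp hk
      exact key k hk'.1 hk'.2
    have hc : ∑ k ∈ Finset.Icc 1 6, (601 - 120 * (k - 1)) = 1806 := by decide
    exact hc ▸ h2
  exact le_trans final swap


lemma last_L (χ : ℕ × ℕ → Fin 3)
    (Hfree : ∀ x y d : ℕ, 0 < x → 0 < y → 0 < d → x + d ≤ 1804 → y + d ≤ 1804 →
      χ (x, y) = χ (x + d, y) → χ (x + d, y) = χ (x + d, y + d) → False)
    (c γ : Fin 3) (hcγ : c ≠ γ) (g p q p' q' : ℕ)
    (hg : 1 ≤ g) (hp1 : 1 ≤ p) (hq2 : q ≤ 1804) (hq'g2 : q' + g ≤ 1804)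
    (hpq : p < q) (hp'q' : p' < q') (hpp' : p < p') (hdiff : q - p = q' - p')
    (hW1 : χ (p' + g, p) ≠ γ) (hW1c : χ (p' + g, p) ≠ c)
    (hW2 : χ (q' + g, p) ≠ γ) (hW2c : χ (q' + g, p) ≠ c)
    (hW3 : χ (q' + g, q) ≠ γ) (hW3c : χ (q' + g, q) ≠ c) : False := by
  have e12 : χ (p' + g, p) = χ (q' + g, p) := fin3_eq c γ _ _ hcγ hW1c hW1 hW2c hW2
  have e23 : χ (q' + g, p) = χ (q' + g, q) := fin3_eq c γ _ _ hcγ hW2c hW2 hW3c hW3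
  have e : (p' + g) + (q' - p') = q' + g := by omega
  have e2 : p + (q' - p') = q := by omega
  refine Hfree (p' + g) p (q' - p') (by omega) (by omega) (by omega) (by omega) (by omega) ?_ ?_
  · rw [e]; exact e12
  · rw [e, e2]; exact e23

set_option maxHeartbeats 2000000 in
/-- Every 3-coloring of the `1804 × 1804` grid contains a monochromatic L;
that is, `R_3(L) ≤ 1804`. -/
theorem R3_le_1804 :
    (∀ χ : ℕ × ℕ → Fin 3, HasMonoL 1804 χ) ∧ RL 3 ≤ 1804 := by
  have main : ∀ χ : ℕ × ℕ → Fin 3, HasMonoL 1804 χ := by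
    intro χ
    by_contra hL
    have Hfree : ∀ x y d : ℕ, 0 < x → 0 < y → 0 < d → x + d ≤ 1804 → y + d ≤ 1804 →
        χ (x, y) = χ (x + d, y) → χ (x + d, y) = χ (x + d, y + d) → False := by
      intro x y d hx hy hd hxd hyd h1 h2
      exact hL ⟨x, y, d, hx, hy, hd, hxd, hyd, h1, h2⟩
    classical
    -- Step 1: majority color on the diagonal
    obtain ⟨c, hc⟩ := fin3_maj (Finset.Icc 1 1804) (fun i => χ (i, i)) 601
      (by rw [Nat.card_Icc]; omega)
    set D := (Finset.Icc 1 1804).filter (fun i => χ (i, i) = c) with hD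
    have hDmem : ∀ p ∈ D, 1 ≤ p ∧ p ≤ 1804 ∧ χ (p, p) = c := by
      intro p hp
      simp only [hD, Finset.mem_filter, Finset.mem_Icc] at hp
      exact ⟨hp.1.1, hp.1.2, hp.2⟩
    have hDcard : 602 ≤ D.card := hc
    -- Step 2: level-1 forcing
    have force1 : ∀ p ∈ D, ∀ q ∈ D, p < q → χ (q, p) ≠ c := by
      intro p hp q hq hpq hcol
      obtain ⟨hp1, hp2, hpc⟩ := hDmem p hp
      obtain ⟨hq1, hq2, hqc⟩ := hDmem q hq
      have e : p + (q - p) = q := by omega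
      refine Hfree p p (q - p) hp1 hp1 (by omega) (by omega) (by omega) ?_ ?_
      · rw [e, hpc, hcol]
      · rw [e, hcol, hqc]
    -- Step 3: successor gaps
    have hDne : D.Nonempty := Finset.card_pos.mp (by omega)
    set T := D.filter (fun p => ((D.filter (fun q => p < q)).Nonempty)) with hT
    have hTsub : ∀ p ∈ T, p ∈ D ∧ (D.filter (fun q => p < q)).Nonempty := by
      intro p hp
      have := Finset.mem_filter.mp hp
      exact ⟨this.1, this.2⟩
    have hTcard : 601 ≤ T.card := by
      have hsub : D.erase (D.max' hDne) ⊆ T := by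
        intro p hp
        obtain ⟨hne, hpD⟩ := Finset.mem_erase.mp hp
        refine Finset.mem_filter.mpr ⟨hpD, ⟨D.max' hDne, Finset.mem_filter.mpr
          ⟨D.max'_mem hDne, lt_of_le_of_ne (D.le_max' p hpD) hne⟩⟩⟩
      have hcle := Finset.card_le_card hsub
      rw [Finset.card_erase_of_mem (D.max'_mem hDne)] at hcle
      omega
    set nxt : ℕ → ℕ := fun p =>
      if h : (D.filter (fun q => p < q)).Nonempty then (D.filter (fun q => p < q)).min' h else 0
      with hnxt
    have hnxt_spec : ∀ p ∈ T, p < nxt p ∧ nxt p ∈ D := by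
      intro p hp
      obtain ⟨hpD, hne⟩ := hTsub p hp
      have e : nxt p = (D.filter (fun q => p < q)).min' hne := by
        simp only [hnxt]; rw [dif_pos hne]
      have hmem := (D.filter (fun q => p < q)).min'_mem hne
      rw [← e] at hmem
      obtain ⟨h1, h2⟩ := Finset.mem_filter.mp hmem
      exact ⟨h2, h1⟩
    have hnxt_le : ∀ p ∈ T, ∀ q ∈ D, p < q → nxt p ≤ q := by
      intro p hp q hq hpq
      obtain ⟨hpD, hne⟩ := hTsub p hp
      have e : nxt p = (D.filter (fun q => p < q)).min' hne := by
        simp only [hnxt]; rw [dif_pos hne]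
      rw [e]
      exact Finset.min'_le _ q (Finset.mem_filter.mpr ⟨hq, hpq⟩)
    set gp : ℕ → ℕ := fun p => nxt p - p with hgp
    have hdisj : ∀ x ∈ T, ∀ y ∈ T, x ≠ y →
        Disjoint (Finset.Ico x (nxt x)) (Finset.Ico y (nxt y)) := by
      intro x hx y hy hne
      rw [Finset.disjoint_left]
      intro a ha hb
      rw [Finset.mem_Ico] at ha hb
      rcases lt_or_gt_of_ne hne with h | h
      · have := hnxt_le x hx y (hTsub y hy).1 h
        omega
      · have := hnxt_le y hy x (hTsub x hx).1 h
        omega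
    have hsum_le : ∑ p ∈ T, gp p ≤ 1804 := by
      have e1 : ∀ p ∈ T, gp p = (Finset.Ico p (nxt p)).card := by
        intro p hp; rw [Nat.card_Ico]
      calc ∑ p ∈ T, gp p = ∑ p ∈ T, (Finset.Ico p (nxt p)).card :=
            Finset.sum_congr rfl e1
        _ = (T.biUnion (fun p => Finset.Ico p (nxt p))).card := (Finset.card_biUnion hdisj).symm
        _ ≤ (Finset.Icc 1 1804).card := by
            refine Finset.card_le_card ?_
            intro a ha
            obtain ⟨p, hp, hap⟩ := Finset.mem_biUnion.mp ha
            rw [Finset.mem_Ico] at hap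
            have h1 := (hDmem p (hTsub p hp).1).1
            have h2 := (hDmem (nxt p) (hnxt_spec p hp).2).2.1
            have h3 := (hnxt_spec p hp).1
            exact Finset.mem_Icc.mpr ⟨by omega, by omega⟩
        _ = 1804 := by rw [Nat.card_Icc]
    have hgp1 : ∀ p ∈ T, 1 ≤ gp p := by
      intro p hp
      have := (hnxt_spec p hp).1
      simp only [hgp]
      omega
    -- Step 4: popular gap
    have hpop : ∃ g, 121 ≤ (T.filter fun p => gp p = g).card := by
      by_contra hcon
      push_neg at hcon
      have hf : ∀ v, (T.filter fun p => gp p = v).card ≤ 120 := fun v => by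
        have := hcon v; omega
      have := sum_gap_lb T gp hgp1 hTcard hf
      omega
    obtain ⟨g, hgcard⟩ := hpop
    set P := T.filter (fun p => gp p = g) with hP
    have hPmem : ∀ p ∈ P, p ∈ D ∧ p + g ∈ D := by
      intro p hp
      obtain ⟨hpT, hpg⟩ := Finset.mem_filter.mp hp
      obtain ⟨hlt, hmem⟩ := hnxt_spec p hpT
      have hpg' : nxt p - p = g := by simpa [hgp] using hpg
      have e : p + g = nxt p := by omega
      exact ⟨(hTsub p hpT).1, by rw [e]; exact hmem⟩
    have hg1 : 1 ≤ g := by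
      have hne : P.Nonempty := Finset.card_pos.mp (by omega)
      obtain ⟨p, hp⟩ := hne
      obtain ⟨hpT, hpg⟩ := Finset.mem_filter.mp hp
      have hpg' : nxt p - p = g := by simpa [hgp] using hpg
      have := (hnxt_spec p hpT).1
      omega
    -- Step 5: majority among the two remaining colors
    have hPforce : ∀ p ∈ P, χ (p + g, p) ≠ c := by
      intro p hp
      obtain ⟨h1, h2⟩ := hPmem p hp
      exact force1 p h1 (p + g) h2 (by omega)
    obtain ⟨γ, hγc, hγcard⟩ := fin3_maj2 P (fun p => χ (p + g, p)) c hPforce (by omega)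
    set J := P.filter (fun p => χ (p + g, p) = γ) with hJ
    have hJmem : ∀ p ∈ J, p ∈ D ∧ p + g ∈ D ∧ χ (p + g, p) = γ := by
      intro p hp
      obtain ⟨hpP, hpγ⟩ := Finset.mem_filter.mp hp
      obtain ⟨h1, h2⟩ := hPmem p hpP
      exact ⟨h1, h2, hpγ⟩
    have hJcard : 61 ≤ J.card := hγcard
    -- Step 6: level-2 forcing
    have force2 : ∀ p ∈ J, ∀ q ∈ J, p < q → χ (q + g, p) ≠ γ := by
      intro p hp q hq hpq hcol
      obtain ⟨hpD, hpgD, hpγ⟩ := hJmem p hp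
      obtain ⟨hqD, hqgD, hqγ⟩ := hJmem q hq
      obtain ⟨hp1, hp2, _⟩ := hDmem p hpD
      obtain ⟨hq1, hq2, _⟩ := hDmem q hqD
      obtain ⟨_, hqg2, _⟩ := hDmem (q + g) hqgD
      have e : (p + g) + (q - p) = q + g := by omega
      have e2 : p + (q - p) = q := by omega
      refine Hfree (p + g) p (q - p) (by omega) (by omega) (by omega) (by omega) (by omega) ?_ ?_
      · rw [e, hpγ, hcol]
      · rw [e, e2, hcol, hqγ]
    -- Step 7: two pairs with equal difference in J
    have hodcard : 3660 ≤ J.offDiag.card := by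
      rw [Finset.offDiag_card]
      have h1 : 3660 + J.card ≤ J.card * J.card := by nlinarith [hJcard]
      omega
    have hmap : ∀ pr ∈ J.offDiag,
        (if pr.1 < pr.2 then pr.2 - pr.1 else pr.1 - pr.2 + 1803) ∈ Finset.Icc 1 3606 := by
      intro pr hpr
      obtain ⟨h1, h2, hne⟩ := Finset.mem_offDiag.mp hpr
      obtain ⟨ha1, ha2, _⟩ := hDmem pr.1 (hJmem pr.1 h1).1
      obtain ⟨hb1, hb2, _⟩ := hDmem pr.2 (hJmem pr.2 h2).1
      by_cases h : pr.1 < pr.2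
      · rw [if_pos h]; exact Finset.mem_Icc.mpr ⟨by omega, by omega⟩
      · rw [if_neg h]; exact Finset.mem_Icc.mpr ⟨by omega, by omega⟩
    have hlt : (Finset.Icc 1 3606).card < J.offDiag.card := by
      rw [Nat.card_Icc]; omega
    obtain ⟨pr1, hpr1, pr2, hpr2, hprne, hpreq⟩ :=
      Finset.exists_ne_map_eq_of_card_lt_of_maps_to hlt hmap
    obtain ⟨ha1, hb1, hne1⟩ := Finset.mem_offDiag.mp hpr1
    obtain ⟨ha2, hb2, hne2⟩ := Finset.mem_offDiag.mp hpr2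
    have hne12 : ¬(pr1.1 = pr2.1 ∧ pr1.2 = pr2.2) := by
      intro h
      exact hprne (Prod.ext_iff.mpr ⟨h.1, h.2⟩)
    obtain ⟨hc11, hc12, _⟩ := hDmem pr1.1 (hJmem pr1.1 ha1).1
    obtain ⟨hc21, hc22, _⟩ := hDmem pr1.2 (hJmem pr1.2 hb1).1
    obtain ⟨hc31, hc32, _⟩ := hDmem pr2.1 (hJmem pr2.1 ha2).1
    obtain ⟨hc41, hc42, _⟩ := hDmem pr2.2 (hJmem pr2.2 hb2).1
    have key : ∃ p ∈ J, ∃ q ∈ J, ∃ p' ∈ J, ∃ q' ∈ J,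
        p < q ∧ p' < q' ∧ p < p' ∧ q - p = q' - p' := by
      by_cases h1 : pr1.1 < pr1.2
      · by_cases h2 : pr2.1 < pr2.2
        · rw [if_pos h1, if_pos h2] at hpreq
          rcases lt_trichotomy pr1.1 pr2.1 with hlt' | heq | hgt
          · exact ⟨pr1.1, ha1, pr1.2, hb1, pr2.1, ha2, pr2.2, hb2, h1, h2, hlt', by omega⟩
          · exact (hne12 ⟨heq, by omega⟩).elim
          · exact ⟨pr2.1, ha2, pr2.2, hb2, pr1.1, ha1, pr1.2, hb1, h2, h1, hgt, by omega⟩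
        · rw [if_pos h1, if_neg h2] at hpreq
          exact absurd hpreq (by omega)
      · by_cases h2 : pr2.1 < pr2.2
        · rw [if_neg h1, if_pos h2] at hpreq
          exact absurd hpreq (by omega)
        · rw [if_neg h1, if_neg h2] at hpreq
          have h1' : pr1.2 < pr1.1 := by omega
          have h2' : pr2.2 < pr2.1 := by omega
          rcases lt_trichotomy pr1.2 pr2.2 with hlt' | heq | hgt
          · exact ⟨pr1.2, hb1, pr1.1, ha1, pr2.2, hb2, pr2.1, ha2, h1', h2', hlt', by omega⟩
          · exact (hne12 ⟨by omega, heq⟩).elim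
          · exact ⟨pr2.2, hb2, pr2.1, ha2, pr1.2, hb1, pr1.1, ha1, h2', h1', hgt, by omega⟩
    obtain ⟨p, hpJ, q, hqJ, p', hp'J, q', hq'J, hpq, hp'q', hpp', hdiff⟩ := key
    -- Step 8: the three determined cells form a monochromatic L
    have hqq' : q < q' := by omega
    have hpq' : p < q' := by omega
    have hW1 := force2 p hpJ p' hp'J hpp'
    have hW2 := force2 p hpJ q' hq'J hpq'
    have hW3 := force2 q hqJ q' hq'J hqq'
    obtain ⟨hp1, hp2, _⟩ := hDmem p (hJmem p hpJ).1
    obtain ⟨hq1, hq2, _⟩ := hDmem q (hJmem q hqJ).1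
    obtain ⟨hp'1, hp'2, _⟩ := hDmem p' (hJmem p' hp'J).1
    obtain ⟨hq'1, hq'2, _⟩ := hDmem q' (hJmem q' hq'J).1
    obtain ⟨_, hp'g2, _⟩ := hDmem (p' + g) (hJmem p' hp'J).2.1
    obtain ⟨_, hq'g2, _⟩ := hDmem (q' + g) (hJmem q' hq'J).2.1
    have hW1c : χ (p' + g, p) ≠ c :=
      force1 p (hJmem p hpJ).1 (p' + g) (hJmem p' hp'J).2.1 (by omega)
    have hW2c : χ (q' + g, p) ≠ c :=
      force1 p (hJmem p hpJ).1 (q' + g) (hJmem q' hq'J).2.1 (by omega)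
    have hW3c : χ (q' + g, q) ≠ c :=
      force1 q (hJmem q hqJ).1 (q' + g) (hJmem q' hq'J).2.1 (by omega)
    have hcγ : c ≠ γ := Ne.symm hγc
    exact last_L χ Hfree c γ hcγ g p q p' q' hg1 hp1 hq2 hq'g2 hpq hp'q' hpp' hdiff
      hW1 hW1c hW2 hW2c hW3 hW3c
  refine ⟨main, ?_⟩
  exact Nat.sInf_le ⟨by norm_num, main⟩
end

section
/- Every 3-coloring of the 1573×1573 grid contains a monochromatic L; that is, R_3(L) ≤ 1573. -/
namespace R3Aux

/-- The set of starts `p` of monochromatic diagonal pairs `(p,p), (p+δ,p+δ)` of color `c`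
whose "corner" `(p+δ, p)` has color `γ`. -/
def Cl (χ : ℕ × ℕ → Fin 3) (δ : ℕ) (c γ : Fin 3) : Finset ℕ :=
  (Finset.Icc 1 (1573 - δ)).filter
    (fun p => χ (p, p) = c ∧ χ (p + δ, p + δ) = c ∧ χ (p + δ, p) = γ)

/-- Starts of monochromatic diagonal pairs at distance `δ`. -/
def Pd (χ : ℕ × ℕ → Fin 3) (δ : ℕ) : Finset ℕ :=
  (Finset.Icc 1 (1573 - δ)).filter (fun p => χ (p, p) = χ (p + δ, p + δ))

/-- Monochromatic (diagonal) pairs inside the window `[t+1, t+9]`. -/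
def Wt (χ : ℕ × ℕ → Fin 3) (t : ℕ) : Finset (ℕ × ℕ) :=
  ((Finset.Icc 1 9) ×ˢ (Finset.Icc 1 9)).filter
    (fun ij => ij.1 < ij.2 ∧ χ (t + ij.1, t + ij.1) = χ (t + ij.2, t + ij.2))

variable (χ : ℕ × ℕ → Fin 3)

lemma noL (hno : ¬ HasMonoL 1573 χ) :
    ∀ x y d : ℕ, 0 < x → 0 < y → 0 < d → x + d ≤ 1573 → y + d ≤ 1573 →
      χ (x, y) = χ (x + d, y) → χ (x + d, y) = χ (x + d, y + d) → False := by
  intro x y d hx hy hd hxd hyd h1 h2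
  exact hno ⟨x, y, d, hx, hy, hd, hxd, hyd, h1, h2⟩

/-- Corner rule for a monochromatic pair on the main diagonal. -/
lemma cornerDiag (hno : ¬ HasMonoL 1573 χ) {p q : ℕ} (hp : 1 ≤ p) (hpq : p < q)
    (hq : q ≤ 1573) (hcol : χ (p, p) = χ (q, q)) : χ (q, p) ≠ χ (p, p) := by
  intro hbad
  have he : p + (q - p) = q := by omega
  refine noL χ hno p p (q - p) hp hp (by omega) (by omega) (by omega) ?_ ?_
  · rw [he]; exact hbad.symm
  · rw [he]; exact hbad.trans hcol

/-- Corner rule for a monochromatic pair in diagonal direction (general position). -/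
lemma cornerOff (hno : ¬ HasMonoL 1573 χ) {a b T : ℕ} (ha : 1 ≤ a) (hb : 1 ≤ b)
    (hT : 0 < T) (haT : a + T ≤ 1573) (hbT : b + T ≤ 1573)
    (hcol : χ (a, b) = χ (a + T, b + T)) : χ (a + T, b) ≠ χ (a, b) := by
  intro hbad
  exact noL χ hno a b T ha hb hT haT hbT hbad.symm (hbad.trans hcol)

lemma mem_Cl {δ : ℕ} {c γ : Fin 3} {p : ℕ} (h : p ∈ Cl χ δ c γ) :
    1 ≤ p ∧ p ≤ 1573 - δ ∧ χ (p, p) = c ∧ χ (p + δ, p + δ) = c ∧ χ (p + δ, p) = γ := by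
  simp only [Cl, Finset.mem_filter, Finset.mem_Icc] at h
  exact ⟨h.1.1, h.1.2, h.2.1, h.2.2.1, h.2.2.2⟩

/-- The forced color of the cell `(v+δ, u)` for two class members `u < v`. -/
lemma Zlem (hno : ¬ HasMonoL 1573 χ) {δ : ℕ} (hδ : 0 < δ) {c γ : Fin 3} {u v : ℕ}
    (hu : u ∈ Cl χ δ c γ) (hv : v ∈ Cl χ δ c γ) (huv : u < v) :
    χ (v + δ, u) ≠ c ∧ χ (v + δ, u) ≠ γ := by
  obtain ⟨hu1, hu2, huc, huc2, huγ⟩ := mem_Cl χ hu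
  obtain ⟨hv1, hv2, hvc, hvc2, hvγ⟩ := mem_Cl χ hv
  have hvN : v + δ ≤ 1573 := by omega
  constructor
  · have h := cornerDiag χ hno (p := u) (q := v + δ) hu1 (by omega) hvN
      (huc.trans hvc2.symm)
    rw [huc] at h
    exact h
  · -- use the two corners (u+δ, u) and (v+δ, v), both of color γ
    have hTe : u + δ + (v - u) = v + δ := by omega
    have hTe2 : u + (v - u) = v := by omega
    have hcol : χ (u + δ, u) = χ (u + δ + (v - u), u + (v - u)) := by
      rw [hTe, hTe2, huγ, hvγ]
    have h := cornerOff χ hno (a := u + δ) (b := u) (T := v - u) (by omega) hu1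
      (by omega) (by omega) (by omega) hcol
    rw [hTe] at h
    rw [huγ] at h
    exact h

lemma eq3 : ∀ a b x y : Fin 3, x ≠ y → a ≠ x → a ≠ y → b ≠ x → b ≠ y → a = b := by
  decide

/-- Core lemma: a class contains no repeated difference. -/
lemma sidon (hno : ¬ HasMonoL 1573 χ) {δ : ℕ} (hδ : 0 < δ) {c γ : Fin 3}
    (hcγ : γ ≠ c) {p q e : ℕ} (he : 0 < e) (hpq : p < q)
    (h1 : p ∈ Cl χ δ c γ) (h2 : p + e ∈ Cl χ δ c γ)
    (h3 : q ∈ Cl χ δ c γ) (h4 : q + e ∈ Cl χ δ c γ) : False := by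
  have hcγ' : c ≠ γ := hcγ.symm
  have Z1 := Zlem χ hno hδ h1 h3 hpq
  have Z2 := Zlem χ hno hδ h1 h4 (by omega)
  have Z3 := Zlem χ hno hδ h2 h4 (by omega)
  have e12 : χ (q + δ, p) = χ (q + e + δ, p) := eq3 _ _ _ _ hcγ' Z1.1 Z1.2 Z2.1 Z2.2
  have e23 : χ (q + e + δ, p) = χ (q + e + δ, p + e) :=
    eq3 _ _ _ _ hcγ' Z2.1 Z2.2 Z3.1 Z3.2
  obtain ⟨h41, h42, -, -, -⟩ := mem_Cl χ h4
  obtain ⟨h21, h22, -, -, -⟩ := mem_Cl χ h2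
  obtain ⟨h11, h12, -, -, -⟩ := mem_Cl χ h1
  obtain ⟨h31, h32, -, -, -⟩ := mem_Cl χ h3
  have hrw : q + δ + e = q + e + δ := by omega
  refine noL χ hno (q + δ) p e (by omega) (by omega) he (by omega) (by omega) ?_ ?_
  · rw [hrw]; exact e12
  · rw [hrw]; exact e23

/-- Every class is small. -/
lemma cardCl (hno : ¬ HasMonoL 1573 χ) {δ : ℕ} (hδ : 0 < δ) {c γ : Fin 3}
    (hcγ : γ ≠ c) : (Cl χ δ c γ).card ≤ 56 := by
  by_contra hlt
  push_neg at hlt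
  have hlt' : 57 ≤ (Cl χ δ c γ).card := hlt
  have key : ∀ a b u v : ℕ, a ∈ Cl χ δ c γ → b ∈ Cl χ δ c γ → u ∈ Cl χ δ c γ →
      v ∈ Cl χ δ c γ → a < b → u < v →
      b - a = v - u → a ≠ u → False := by
    intro a b u v ha hb hu hv hab huv hdiff hne
    rcases Nat.lt_or_ge a u with h | h
    · obtain ⟨f, hf0, rfl⟩ : ∃ f, 0 < f ∧ u = a + f := ⟨u - a, by omega, by omega⟩
      have hv' : v = b + f := by omega
      subst hv'
      exact sidon χ hno hδ hcγ hf0 hab ha hu hb hv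
    · have h' : u < a := by omega
      obtain ⟨f, hf0, rfl⟩ : ∃ f, 0 < f ∧ a = u + f := ⟨a - u, by omega, by omega⟩
      have hb' : b = v + f := by omega
      subst hb'
      exact sidon χ hno hδ hcγ hf0 huv hu ha hv hb
  -- pigeonhole on signed differences (encoded into a single natural number)
  have hmaps : ∀ pq ∈ (Cl χ δ c γ).offDiag,
      (if pq.1 < pq.2 then pq.2 - pq.1 else 1572 + (pq.1 - pq.2)) ∈ Finset.Icc 1 3144 := by
    intro pq hpq
    obtain ⟨h1, h2, hne⟩ := Finset.mem_offDiag.mp hpq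
    obtain ⟨h11, h12, -, -, -⟩ := mem_Cl χ h1
    obtain ⟨h21, h22, -, -, -⟩ := mem_Cl χ h2
    rw [Finset.mem_Icc]
    split <;> omega
  have hcard : (Finset.Icc 1 3144).card < (Cl χ δ c γ).offDiag.card := by
    rw [Finset.offDiag_card]
    have h1 : (Finset.Icc 1 3144).card = 3144 := by simp
    rw [h1]
    have hm1 : 57 * (Cl χ δ c γ).card ≤ (Cl χ δ c γ).card * (Cl χ δ c γ).card :=
      Nat.mul_le_mul_right _ hlt'
    omega
  obtain ⟨pq1, hpq1, pq2, hpq2, hne, heq⟩ :=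
    Finset.exists_ne_map_eq_of_card_lt_of_maps_to hcard hmaps
  obtain ⟨a, b⟩ := pq1
  obtain ⟨u, v⟩ := pq2
  obtain ⟨ha, hb, hab⟩ := Finset.mem_offDiag.mp hpq1
  obtain ⟨hu, hv, huv⟩ := Finset.mem_offDiag.mp hpq2
  simp only at heq ha hb hu hv hab huv
  have hne' : ¬ (a = u ∧ b = v) := by
    intro ⟨hh1, hh2⟩; subst hh1; subst hh2; exact hne rfl
  obtain ⟨ha1, ha2, -, -, -⟩ := mem_Cl χ ha
  obtain ⟨hb1, hb2, -, -, -⟩ := mem_Cl χ hb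
  obtain ⟨hu1, hu2, -, -, -⟩ := mem_Cl χ hu
  obtain ⟨hv1, hv2, -, -, -⟩ := mem_Cl χ hv
  rcases Nat.lt_or_ge a b with hab' | hab'
  · have huv' : u < v := by
      by_contra hc
      rw [if_pos hab', if_neg (by omega)] at heq
      omega
    have hdiff : b - a = v - u := by
      rw [if_pos hab', if_pos huv'] at heq
      exact heq
    exact key a b u v ha hb hu hv hab' huv' hdiff (by
      intro hau
      subst hau
      exact hne' ⟨rfl, by omega⟩)
  · have hab2 : b < a := by omega
    have huv' : v < u := by
      by_contra hc
      have : u < v := by omega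
      rw [if_neg (by omega), if_pos this] at heq
      omega
    have hdiff : a - b = u - v := by
      rw [if_neg (by omega), if_neg (by omega)] at heq
      omega
    exact key b a v u hb ha hv hu hab2 huv' hdiff (by
      intro hbv
      subst hbv
      exact hne' ⟨by omega, rfl⟩)

lemma clEmpty (hno : ¬ HasMonoL 1573 χ) {δ : ℕ} (hδ : 0 < δ) (c : Fin 3) :
    Cl χ δ c c = ∅ := by
  ext p
  simp only [Cl, Finset.mem_filter, Finset.mem_Icc, Finset.notMem_empty, iff_false, not_and]
  rintro ⟨h1, h2⟩ hc1 hc2 hγ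
  have h := cornerDiag χ hno (p := p) (q := p + δ) h1 (by omega) (by omega)
    (hc1.trans hc2.symm)
  rw [hc1] at h
  exact h (hγ.trans rfl)

lemma cardPd (hno : ¬ HasMonoL 1573 χ) {δ : ℕ} (hδ : 0 < δ) : (Pd χ δ).card ≤ 336 := by
  have hsub : Pd χ δ ⊆ (Finset.univ : Finset (Fin 3 × Fin 3)).biUnion
      (fun cg => Cl χ δ cg.1 cg.2) := by
    intro p hp
    simp only [Pd, Finset.mem_filter, Finset.mem_Icc] at hp
    refine Finset.mem_biUnion.2 ⟨(χ (p, p), χ (p + δ, p)), Finset.mem_univ _, ?_⟩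
    refine Finset.mem_filter.mpr ⟨Finset.mem_Icc.mpr ⟨hp.1.1, hp.1.2⟩, rfl, hp.2.symm, rfl⟩
  calc (Pd χ δ).card
      ≤ ∑ cg ∈ (Finset.univ : Finset (Fin 3 × Fin 3)), (Cl χ δ cg.1 cg.2).card :=
        le_trans (Finset.card_le_card hsub) (Finset.card_biUnion_le)
    _ ≤ ∑ cg ∈ (Finset.univ : Finset (Fin 3 × Fin 3)),
          (if cg.1 = cg.2 then 0 else 56) := by
        refine Finset.sum_le_sum ?_
        intro cg _
        by_cases h : cg.1 = cg.2
        · rw [if_pos h]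
          have : Cl χ δ cg.1 cg.2 = ∅ := by rw [h]; exact clEmpty χ hno hδ cg.2
          simp [this]
        · rw [if_neg h]
          exact cardCl χ hno hδ (fun hh => h hh.symm)
    _ = 336 := by decide

/-- Pure pigeonhole: every 9-window on the diagonal contains at least 9 mono pairs. -/
lemma windowLB (t : ℕ) : 9 ≤ (Wt χ t).card := by
  classical
  set f : ℕ → Fin 3 := fun i => χ (t + i, t + i) with hf
  set S9 : Finset ℕ := Finset.Icc 1 9 with hS9
  set fib : Fin 3 → Finset ℕ := fun u => S9.filter (fun i => f i = u) with hfib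
  have hsum : ∑ u : Fin 3, (fib u).card = 9 := by
    have h := Finset.card_eq_sum_card_fiberwise
      (f := f) (s := S9) (t := (Finset.univ : Finset (Fin 3)))
      (fun x _ => Finset.mem_univ _)
    have h9 : S9.card = 9 := by simp [hS9]
    rw [h9] at h
    exact h.symm
  -- the "equal color" pair set
  set E : Finset (ℕ × ℕ) := (S9 ×ˢ S9).filter (fun ij => f ij.1 = f ij.2) with hE
  have hEcard : E.card = ∑ u : Fin 3, (fib u).card * (fib u).card := by
    have hEeq : E = (Finset.univ : Finset (Fin 3)).biUnion (fun u => (fib u) ×ˢ (fib u)) := by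
      ext ij
      simp only [hE, hfib, Finset.mem_filter, Finset.mem_product, Finset.mem_biUnion,
        Finset.mem_univ, true_and]
      constructor
      · rintro ⟨⟨hi, hj⟩, hc⟩
        exact ⟨f ij.2, ⟨hi, hc⟩, ⟨hj, rfl⟩⟩
      · rintro ⟨u, ⟨hi, hci⟩, ⟨hj, hcj⟩⟩
        exact ⟨⟨hi, hj⟩, hci.trans hcj.symm⟩
    rw [hEeq, Finset.card_biUnion]
    · refine Finset.sum_congr rfl ?_
      intro u _
      rw [Finset.card_product]
    · intro u _ v _ huv
      rw [Function.onFun, Finset.disjoint_left]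
      intro ij hij1 hij2
      simp only [hfib, Finset.mem_product, Finset.mem_filter] at hij1 hij2
      exact huv (hij1.1.2.symm.trans hij2.1.2)
  -- split E into diagonal, lower, upper parts
  have hsplit1 : (E.filter (fun ij => ij.1 = ij.2)).card +
      (E.filter (fun ij => ¬ ij.1 = ij.2)).card = E.card :=
    Finset.card_filter_add_card_filter_not _
  have hsplit2 : ((E.filter (fun ij => ¬ ij.1 = ij.2)).filter (fun ij => ij.1 < ij.2)).card +
      ((E.filter (fun ij => ¬ ij.1 = ij.2)).filter (fun ij => ¬ ij.1 < ij.2)).card =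
      (E.filter (fun ij => ¬ ij.1 = ij.2)).card :=
    Finset.card_filter_add_card_filter_not _
  have hdiag : (E.filter (fun ij => ij.1 = ij.2)).card ≤ 9 := by
    have : (E.filter (fun ij => ij.1 = ij.2)).card ≤ S9.card := by
      refine Finset.card_le_card_of_injOn (fun ij => ij.1) ?_ ?_
      · intro ij hij
        simp only [hE, Finset.mem_coe, Finset.mem_filter, Finset.mem_product] at hij
        exact hij.1.1.1
      · intro ij hij ij' hij' hh
        simp only [Finset.mem_coe, Finset.mem_filter] at hij hij'
        have := hij.2
        have := hij'.2
        ext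
        · exact hh
        · rw [← hij.2, ← hij'.2]; exact hh
    simpa [hS9] using this
  have hlt : ((E.filter (fun ij => ¬ ij.1 = ij.2)).filter (fun ij => ij.1 < ij.2)).card ≤
      (Wt χ t).card := by
    refine Finset.card_le_card ?_
    intro ij hij
    simp only [Finset.mem_filter, hE, Finset.mem_product] at hij
    simp only [Wt, Finset.mem_filter, Finset.mem_product]
    exact ⟨⟨hij.1.1.1.1, hij.1.1.1.2⟩, hij.2, hij.1.1.2⟩
  have hgt : ((E.filter (fun ij => ¬ ij.1 = ij.2)).filter (fun ij => ¬ ij.1 < ij.2)).card ≤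
      (Wt χ t).card := by
    refine Finset.card_le_card_of_injOn (fun ij => (ij.2, ij.1)) ?_ ?_
    · intro ij hij
      simp only [Finset.mem_coe, Finset.mem_filter, hE, Finset.mem_product] at hij
      simp only [Wt, Finset.mem_coe, Finset.mem_filter, Finset.mem_product]
      refine ⟨⟨hij.1.1.1.2, hij.1.1.1.1⟩, by omega, hij.1.1.2.symm⟩
    · intro ij _ ij' _ hh
      simp only [Prod.mk.injEq] at hh
      ext
      · exact hh.2
      · exact hh.1
  -- convexity : sum of squares at least 27
  have hconv : 27 ≤ ∑ u : Fin 3, (fib u).card * (fib u).card := by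
    have h3 : (fib 0).card + (fib 1).card + (fib 2).card = 9 := by
      rw [← hsum, Fin.sum_univ_three]
    rw [Fin.sum_univ_three]
    have h3' : ((fib 0).card : ℤ) + (fib 1).card + (fib 2).card = 9 := by exact_mod_cast h3
    zify
    nlinarith [h3', sq_nonneg (((fib 0).card : ℤ) - (fib 1).card),
      sq_nonneg (((fib 0).card : ℤ) - (fib 2).card),
      sq_nonneg (((fib 1).card : ℤ) - (fib 2).card)]
  omega

set_option linter.constructorNameAsVariable false in
/-- The final contradiction. -/
lemma contra (hno : ¬ HasMonoL 1573 χ) : False := by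
  classical
  set B := (Finset.range 1565).sigma (fun t => Wt χ t) with hB
  have hlow : 14085 ≤ B.card := by
    rw [hB, Finset.card_sigma]
    calc (14085 : ℕ) = ∑ _t ∈ Finset.range 1565, 9 := by simp
      _ ≤ ∑ t ∈ Finset.range 1565, (Wt χ t).card :=
          Finset.sum_le_sum (fun t _ => windowLB χ t)
  set T := (Finset.Icc 1 8).sigma (fun δ => (Pd χ δ) ×ˢ (Finset.Icc 1 (9 - δ))) with hT
  have hup : B.card ≤ T.card := by
    refine Finset.card_le_card_of_injOn
      (fun x => ⟨x.2.2 - x.2.1, (x.1 + x.2.1, x.2.1)⟩) ?_ ?_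
    · rintro ⟨t, i, j⟩ hx
      simp only [hB, Finset.mem_coe, Finset.mem_sigma, Finset.mem_range, Wt, Finset.mem_filter,
        Finset.mem_product, Finset.mem_Icc] at hx
      obtain ⟨ht, ⟨⟨hi1, hi9⟩, hj1, hj9⟩, hij, hcol⟩ := hx
      simp only [hT, Finset.mem_coe, Finset.mem_sigma, Finset.mem_Icc, Finset.mem_product, Pd,
        Finset.mem_filter]
      refine ⟨⟨by omega, by omega⟩, ⟨⟨by omega, by omega⟩, ?_⟩, by omega, by omega⟩
      have hrw : t + i + (j - i) = t + j := by omega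
      rw [hrw]
      exact hcol
    · rintro ⟨t, i, j⟩ hx ⟨t', i', j'⟩ hx' hh
      simp only [hB, Finset.mem_coe, Finset.mem_sigma, Finset.mem_range, Wt,
        Finset.mem_filter, Finset.mem_product, Finset.mem_Icc] at hx hx'
      obtain ⟨ht, ⟨⟨hi1, hi9⟩, hj1, hj9⟩, hij, -⟩ := hx
      obtain ⟨ht', ⟨⟨hi1', hi9'⟩, hj1', hj9'⟩, hij', -⟩ := hx'
      simp only [Sigma.mk.inj_iff, Prod.mk.injEq] at hh
      obtain ⟨h1, h2⟩ := hh
      have h2' : t + i = t' + i' ∧ i = i' := by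
        have := heq_iff_eq.mp h2
        exact ⟨congrArg Prod.fst this, congrArg Prod.snd this⟩
      have hti : t = t' := by omega
      have hjj : j = j' := by omega
      subst hti
      subst hjj
      have : i = i' := h2'.2
      subst this
      rfl
  have hTcard : T.card ≤ 12096 := by
    rw [hT, Finset.card_sigma]
    calc ∑ δ ∈ Finset.Icc 1 8, ((Pd χ δ) ×ˢ (Finset.Icc 1 (9 - δ))).card
        ≤ ∑ δ ∈ Finset.Icc 1 8, 336 * (9 - δ) := by
          refine Finset.sum_le_sum ?_
          intro δ hδ
          rw [Finset.mem_Icc] at hδ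
          rw [Finset.card_product]
          have h1 : (Pd χ δ).card ≤ 336 := cardPd χ hno (by omega)
          have h2 : (Finset.Icc 1 (9 - δ)).card = 9 - δ := by
            rw [Nat.card_Icc]; omega
          rw [h2]
          exact Nat.mul_le_mul_right _ h1
      _ = 12096 := by decide
  omega

end R3Aux

/-- Every 3-coloring of the `1573 × 1573` grid contains a monochromatic L;
that is, `R_3(L) ≤ 1573`. -/
theorem R3_le_1573 :
    (∀ χ : ℕ × ℕ → Fin 3, HasMonoL 1573 χ) ∧ RL 3 ≤ 1573 := by
  have main : ∀ χ : ℕ × ℕ → Fin 3, HasMonoL 1573 χ := by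
    intro χ
    by_contra hno
    exact R3Aux.contra χ hno
  refine ⟨main, ?_⟩
  exact Nat.sInf_le ⟨by norm_num, main⟩
end

section
/- Let n ≥ 3, let χ be a 3-coloring of the n×n grid with colors red, blue, green, and fix an integer k with 1 ≤ k ≤ n−1. Suppose the points (a₁+k, a₁), (a₂+k, a₂), (a₃+k, a₃), (a₄+k, a₄) on the subdiagonal S_k are each forced by red to be blue, with a₁ < a₂, a₃ < a₄, a₂ − a₁ = a₄ − a₃, and (a₁, a₂) ≠ (a₃, a₄). Then χ contains a monochromatic L. (Equivalently, in any 3-coloring with no monochromatic L, the positions of the points on a fixed subdiagonal that are forced by red to be blue form a Golomb ruler: no two distinct pairs of them are the same distance apart.) -/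
/-- The colors: `red = 0`, `blue = 1`, `green = 2`. -/
notation "red" => (0 : Fin 3)
notation "blue" => (1 : Fin 3)

/-- The point `(a + k, a)` of the subdiagonal `S_k` is forced by red to be blue:
it lies in the grid, is colored blue, and the two corresponding points on the
main diagonal are red. -/
def ForcedBlue (n k : ℕ) (χ : ℕ × ℕ → Fin 3) (a : ℕ) : Prop :=
  1 ≤ a ∧ a + k ≤ n ∧
    χ (a + k, a) = blue ∧ χ (a, a) = red ∧ χ (a + k, a + k) = red

private lemma fin3_cases (c : Fin 3) : c = 0 ∨ c = 1 ∨ c = 2 := by revert c; decide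

private lemma mono_L_aux (n k : ℕ) (χ : ℕ × ℕ → Fin 3)
    (a₁ a₂ a₃ a₄ : ℕ)
    (h₁ : ForcedBlue n k χ a₁) (h₂ : ForcedBlue n k χ a₂)
    (h₃ : ForcedBlue n k χ a₃) (h₄ : ForcedBlue n k χ a₄)
    (h₁₂ : a₁ < a₂) (h₃₄ : a₃ < a₄) (h₁₃ : a₁ < a₃)
    (hgap : a₂ - a₁ = a₄ - a₃) : HasMonoL n χ := by
  obtain ⟨p₁, q₁, b₁, r₁, s₁⟩ := h₁
  obtain ⟨p₂, q₂, b₂, r₂, s₂⟩ := h₂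
  obtain ⟨p₃, q₃, b₃, r₃, s₃⟩ := h₃
  obtain ⟨p₄, q₄, b₄, r₄, s₄⟩ := h₄
  have h₂₄ : a₂ < a₄ := by omega
  rcases fin3_cases (χ (a₄ + k, a₂)) with hq | hq | hq
  · -- q red : L at (a₂,a₂), (a₄+k,a₂), (a₄+k,a₄+k)
    refine ⟨a₂, a₂, a₄ + k - a₂, by omega, by omega, by omega, by omega, by omega, ?_, ?_⟩ <;>
      rw [show a₂ + (a₄ + k - a₂) = a₄ + k from by omega]
    · rw [r₂, hq]
    · rw [hq, s₄]
  · -- q blue : L at (a₂+k,a₂), (a₄+k,a₂), (a₄+k,a₄)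
    refine ⟨a₂ + k, a₂, a₄ - a₂, by omega, by omega, by omega, by omega, by omega, ?_, ?_⟩ <;>
      rw [show a₂ + k + (a₄ - a₂) = a₄ + k from by omega]
    · rw [b₂, hq]
    · rw [hq, show a₂ + (a₄ - a₂) = a₄ from by omega, b₄]
  · -- q green
    rcases fin3_cases (χ (a₃ + k, a₁)) with hq' | hq' | hq'
    · -- q' red : L at (a₁,a₁), (a₃+k,a₁), (a₃+k,a₃+k)
      refine ⟨a₁, a₁, a₃ + k - a₁, by omega, by omega, by omega, by omega, by omega, ?_, ?_⟩ <;>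
        rw [show a₁ + (a₃ + k - a₁) = a₃ + k from by omega]
      · rw [r₁, hq']
      · rw [hq', s₃]
    · -- q' blue : L at (a₁+k,a₁), (a₃+k,a₁), (a₃+k,a₃)
      refine ⟨a₁ + k, a₁, a₃ - a₁, by omega, by omega, by omega, by omega, by omega, ?_, ?_⟩ <;>
        rw [show a₁ + k + (a₃ - a₁) = a₃ + k from by omega]
      · rw [b₁, hq']
      · rw [hq', show a₁ + (a₃ - a₁) = a₃ from by omega, b₃]
    · -- both green, look at m = (a₄+k, a₁)
      rcases fin3_cases (χ (a₄ + k, a₁)) with hm | hm | hm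
      · -- m red : L at (a₁,a₁), (a₄+k,a₁), (a₄+k,a₄+k)
        refine ⟨a₁, a₁, a₄ + k - a₁, by omega, by omega, by omega, by omega, by omega, ?_, ?_⟩ <;>
          rw [show a₁ + (a₄ + k - a₁) = a₄ + k from by omega]
        · rw [r₁, hm]
        · rw [hm, s₄]
      · -- m blue : L at (a₁+k,a₁), (a₄+k,a₁), (a₄+k,a₄)
        refine ⟨a₁ + k, a₁, a₄ - a₁, by omega, by omega, by omega, by omega, by omega, ?_, ?_⟩ <;>
          rw [show a₁ + k + (a₄ - a₁) = a₄ + k from by omega]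
        · rw [b₁, hm]
        · rw [hm, show a₁ + (a₄ - a₁) = a₄ from by omega, b₄]
      · -- m green : L at (a₃+k,a₁), (a₄+k,a₁), (a₄+k,a₂)
        refine ⟨a₃ + k, a₁, a₂ - a₁, by omega, by omega, by omega, by omega, by omega, ?_, ?_⟩ <;>
          rw [show a₃ + k + (a₂ - a₁) = a₄ + k from by omega]
        · rw [hq', hm]
        · rw [hm, show a₁ + (a₂ - a₁) = a₂ from by omega, hq]

/-- If on a fixed subdiagonal `S_k` there are two distinct pairs of points
forced by red to be blue whose members are the same distance apart, then the
coloring contains a monochromatic L.  (Equivalently, in an L-free 3-coloring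
the positions of the forced-blue points on `S_k` form a Golomb ruler.) -/
theorem mono_L_of_repeated_gap (n : ℕ) (hn : 3 ≤ n) (χ : ℕ × ℕ → Fin 3)
    (k : ℕ) (hk₁ : 1 ≤ k) (hk₂ : k ≤ n - 1)
    (a₁ a₂ a₃ a₄ : ℕ)
    (h₁ : ForcedBlue n k χ a₁) (h₂ : ForcedBlue n k χ a₂)
    (h₃ : ForcedBlue n k χ a₃) (h₄ : ForcedBlue n k χ a₄)
    (h₁₂ : a₁ < a₂) (h₃₄ : a₃ < a₄)
    (hgap : a₂ - a₁ = a₄ - a₃)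
    (hne : (a₁, a₂) ≠ (a₃, a₄)) :
    HasMonoL n χ := by
  have hne' : a₁ ≠ a₃ := by
    intro h
    exact hne (by simp [h]; omega)
  rcases lt_or_gt_of_ne hne' with h | h
  · exact mono_L_aux n k χ a₁ a₂ a₃ a₄ h₁ h₂ h₃ h₄ h₁₂ h₃₄ h hgap
  · exact mono_L_aux n k χ a₃ a₄ a₁ a₂ h₃ h₄ h₁ h₂ h₃₄ h₁₂ h (by omega)
end

section
/- Let k and m be positive integers with m ≥ 2, and suppose there exists a k-coloring c of {1, 2, …, m−1} containing no monochromatic 3-term arithmetic progression (i.e., there are no positive integers i and t with i + 2t ≤ m−1 such that c(i) = c(i+t) = c(i+2t)). Then there exists a k-coloring of the ⌊m/2⌋ × ⌊m/2⌋ grid with no monochromatic L, namely the coloring assigning to each point (i,j) the color c(i+j−1). In particular, R_k(L) ≥ ⌊W(k,3)/2⌋ + 1, where W(k,3) is the van der Waerden number for k colors and progressions of length 3. -/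
/-- The van der Waerden number `W(k, 3)`: the least positive integer `N` such
that every `k`-coloring of `{1, …, N}` contains a monochromatic 3-term
arithmetic progression. -/
noncomputable def W3 (k : ℕ) : ℕ :=
  sInf {N : ℕ | 0 < N ∧ ∀ c : ℕ → Fin k, ∃ a d : ℕ, 0 < a ∧ 0 < d ∧
    a + 2 * d ≤ N ∧ c a = c (a + d) ∧ c (a + d) = c (a + 2 * d)}

/-- The reverse-diagonal coloring has no monochromatic L. -/
lemma noMonoL_of_noAP {k : ℕ} (m : ℕ) (c : ℕ → Fin k)
    (hc : ∀ i t : ℕ, 0 < i → 0 < t → i + 2 * t ≤ m - 1 →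
      ¬(c i = c (i + t) ∧ c (i + t) = c (i + 2 * t))) :
    ¬ HasMonoL (m / 2) (fun p => c (p.1 + p.2 - 1)) := by
  rintro ⟨x, y, d, hx, hy, hd, hxd, hyd, h1, h2⟩
  simp only at h1 h2
  apply hc (x + y - 1) d (by omega) hd (by omega)
  have e1 : x + y - 1 + d = x + d + y - 1 := by omega
  have e2 : x + y - 1 + 2 * d = x + d + (y + d) - 1 := by omega
  rw [e1, e2]
  exact ⟨h1, h2⟩

/-- The set defining `RL k` is nonempty: a compactness argument plus
Gallai's theorem (`Combinatorics.exists_mono_homothetic_copy`). -/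
lemma RLset_nonempty (k : ℕ) :
    {n : ℕ | 0 < n ∧ ∀ χ : ℕ × ℕ → Fin k, HasMonoL n χ}.Nonempty := by
  by_contra hempty
  rw [Set.not_nonempty_iff_eq_empty] at hempty
  have hall : ∀ n : ℕ, ∃ χ : ℕ × ℕ → Fin k, ¬ HasMonoL (n + 1) χ := by
    intro n
    by_contra h
    push_neg at h
    have : (n + 1) ∈ {n : ℕ | 0 < n ∧ ∀ χ : ℕ × ℕ → Fin k, HasMonoL n χ} :=
      ⟨Nat.succ_pos n, h⟩
    rw [hempty] at this
    exact this
  choose χ hχ using hall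
  set U : Ultrafilter ℕ := Filter.hyperfilter ℕ with hU
  -- limit coloring
  have hlim : ∀ p : ℕ × ℕ, ∃ i : Fin k, {n : ℕ | χ n p = i} ∈ U := by
    intro p
    obtain ⟨i, hi⟩ := Ultrafilter.eq_pure_of_finite (U.map fun n => χ n p)
    refine ⟨i, ?_⟩
    have : {i} ∈ U.map fun n => χ n p := by
      rw [hi]; exact Filter.singleton_mem_pure
    simpa [Ultrafilter.mem_map, Set.preimage, Set.mem_singleton_iff] using this
  choose f hf using hlim
  -- Gallai for the L-shape
  obtain ⟨a, ha, b, c0, hmono⟩ := Combinatorics.exists_mono_homothetic_copy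
    ({(0, 0), (1, 0), (1, 1)} : Finset (ℕ × ℕ)) (fun p => f (p + (1, 1)))
  have h00 := hmono (0, 0) (by simp)
  have h10 := hmono (1, 0) (by simp)
  have h11 := hmono (1, 1) (by simp)
  set x := b.1 + 1 with hx
  set y := b.2 + 1 with hy
  have e00 : a • ((0 : ℕ), (0 : ℕ)) + b + (1, 1) = (x, y) := by
    simp [hx, hy, Prod.ext_iff]
  have e10 : a • ((1 : ℕ), (0 : ℕ)) + b + (1, 1) = (x + a, y) := by
    simp [hx, hy, Prod.ext_iff]; omega
  have e11 : a • ((1 : ℕ), (1 : ℕ)) + b + (1, 1) = (x + a, y + a) := by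
    simp [hx, hy, Prod.ext_iff]; omega
  have hf1 : f (x, y) = c0 := by rw [← e00]; exact h00
  have hf2 : f (x + a, y) = c0 := by rw [← e10]; exact h10
  have hf3 : f (x + a, y + a) = c0 := by rw [← e11]; exact h11
  -- find a single n where χ n agrees with f at all three points and is large
  have hbig : {n : ℕ | x + a ≤ n + 1 ∧ y + a ≤ n + 1} ∈ U := by
    have : {n : ℕ | x + a ≤ n + 1 ∧ y + a ≤ n + 1} ∈ Filter.cofinite := by
      rw [Nat.cofinite_eq_atTop]
      filter_upwards [Filter.eventually_ge_atTop (x + a + y)] with n hn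
      constructor <;> omega
    exact (Filter.hyperfilter_le_cofinite) this
  have hmem : {n : ℕ | χ n (x, y) = f (x, y)} ∩ {n : ℕ | χ n (x + a, y) = f (x + a, y)}
      ∩ {n : ℕ | χ n (x + a, y + a) = f (x + a, y + a)}
      ∩ {n : ℕ | x + a ≤ n + 1 ∧ y + a ≤ n + 1} ∈ U := by
    exact Filter.inter_mem (Filter.inter_mem (Filter.inter_mem (hf _) (hf _)) (hf _)) hbig
  obtain ⟨n, ⟨⟨⟨hn1, hn2⟩, hn3⟩, hn4, hn5⟩⟩ := U.nonempty_of_mem hmem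
  apply hχ n
  refine ⟨x, y, a, by omega, by omega, ha, hn4, hn5, ?_, ?_⟩
  · rw [hn1, hn2, hf1, hf2]
  · rw [hn2, hn3, hf2, hf3]

/-- If `c` is a `k`-coloring of `{1, …, m−1}` with no monochromatic 3-term
arithmetic progression, then the coloring of the `⌊m/2⌋ × ⌊m/2⌋` grid assigning
to `(i, j)` the color `c (i + j − 1)` has no monochromatic L.  In particular
`R_k(L) ≥ ⌊W(k,3)/2⌋ + 1`. -/
theorem reverse_diagonal_coloring (k m : ℕ) (hk : 0 < k) (hm : 2 ≤ m)
    (c : ℕ → Fin k)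
    (hc : ∀ i t : ℕ, 0 < i → 0 < t → i + 2 * t ≤ m - 1 →
      ¬(c i = c (i + t) ∧ c (i + t) = c (i + 2 * t))) :
    ¬ HasMonoL (m / 2) (fun p => c (p.1 + p.2 - 1)) ∧ W3 k / 2 + 1 ≤ RL k := by
  have hS := RLset_nonempty k
  have hRL : RL k ∈ {n : ℕ | 0 < n ∧ ∀ χ : ℕ × ℕ → Fin k, HasMonoL n χ} :=
    Nat.sInf_mem hS
  refine ⟨noMonoL_of_noAP m c hc, ?_⟩
  by_cases hW : W3 k ≤ 1
  · have h1 : 0 < RL k := hRL.1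
    omega
  · push_neg at hW
    -- W3 k ≥ 2, so the defining set is nonempty and W3 k - 1 fails the property
    have hWset : {N : ℕ | 0 < N ∧ ∀ c : ℕ → Fin k, ∃ a d : ℕ, 0 < a ∧ 0 < d ∧
        a + 2 * d ≤ N ∧ c a = c (a + d) ∧ c (a + d) = c (a + 2 * d)}.Nonempty := by
      by_contra h
      rw [Set.not_nonempty_iff_eq_empty] at h
      have : W3 k = 0 := by rw [W3, h]; exact Nat.sInf_empty
      omega
    have hlt : W3 k - 1 ∉ {N : ℕ | 0 < N ∧ ∀ c : ℕ → Fin k, ∃ a d : ℕ, 0 < a ∧ 0 < d ∧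
        a + 2 * d ≤ N ∧ c a = c (a + d) ∧ c (a + d) = c (a + 2 * d)} := by
      apply Nat.notMem_of_lt_sInf
      show W3 k - 1 < W3 k
      omega
    have hpos : 0 < W3 k - 1 := by omega
    have : ∃ c' : ℕ → Fin k, ∀ a d : ℕ, 0 < a → 0 < d → a + 2 * d ≤ W3 k - 1 →
        ¬(c' a = c' (a + d) ∧ c' (a + d) = c' (a + 2 * d)) := by
      by_contra h
      push_neg at h
      apply hlt
      refine ⟨hpos, fun c' => ?_⟩
      obtain ⟨a, d, ha, hd, hle, hcc⟩ := h c'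
      exact ⟨a, d, ha, hd, hle, hcc⟩
    obtain ⟨c', hc'⟩ := this
    have hnoL := noMonoL_of_noAP (W3 k) c' hc'
    by_contra hcon
    push_neg at hcon
    apply hnoL
    obtain ⟨x, y, d, h1, h2, h3, h4, h5, h6, h7⟩ := hRL.2 (fun p => c' (p.1 + p.2 - 1))
    exact ⟨x, y, d, h1, h2, h3, by omega, by omega, h6, h7⟩
end

section
/- There exists a 3-coloring of the 20×20 grid containing no monochromatic L; consequently R_3(L) ≥ 21. -/
open Combinatorics in
lemma grid_ramsey : {n : ℕ | 0 < n ∧ ∀ χ : ℕ × ℕ → Fin 3, HasMonoL n χ}.Nonempty := by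
  classical
  set S : Finset (ℕ × ℕ) := {(0,0),(1,0),(1,1)} with hSdef
  obtain ⟨ι, _inst, hι⟩ := Line.exists_mono_in_high_dimension (↑S : Set (ℕ × ℕ)) (Fin 3)
  refine ⟨Fintype.card ι + 1, Nat.succ_pos _, fun χ => ?_⟩
  obtain ⟨l, c, hl⟩ := hι fun v => χ ((∑ i, (v i : ℕ × ℕ)) + (1,1))
  set s : Finset ι := Finset.univ.filter (fun i => l.idxFun i = none) with hs
  set b : ℕ × ℕ :=
    ∑ i ∈ sᶜ, ((l.idxFun i).map (fun (m : (↑S : Set (ℕ × ℕ))) => (m : ℕ × ℕ))).getD 0 with hb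
  have key : ∀ (x : ℕ × ℕ) (h : x ∈ (↑S : Set (ℕ × ℕ))),
      (∑ i, (((l.idxFun i).getD ⟨x, h⟩ : (↑S : Set (ℕ × ℕ))) : ℕ × ℕ)) = s.card • x + b := by
    intro x hx
    rw [← Finset.sum_add_sum_compl s]
    congr 1
    · rw [← Finset.sum_const]
      apply Finset.sum_congr rfl
      intro i hi
      rw [hs, Finset.mem_filter] at hi
      rw [hi.right]; rfl
    · apply Finset.sum_congr rfl
      intro i hi
      rw [hs, Finset.compl_filter, Finset.mem_filter] at hi
      obtain ⟨y, hy⟩ := Option.ne_none_iff_exists.mp hi.right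
      simp_rw [← hy, Option.map_some, Option.getD]
  have hd : 0 < s.card := Finset.card_pos.mpr ⟨l.proper.choose, by
    rw [hs, Finset.mem_filter]; exact ⟨Finset.mem_univ _, l.proper.choose_spec⟩⟩
  have hscard : s.card + sᶜ.card = Fintype.card ι := by
    rw [Finset.card_add_card_compl]
  have hbound : ∀ i ∈ sᶜ,
      (((l.idxFun i).map (fun (m : (↑S : Set (ℕ × ℕ))) => (m : ℕ × ℕ))).getD 0).1 ≤ 1 ∧
      (((l.idxFun i).map (fun (m : (↑S : Set (ℕ × ℕ))) => (m : ℕ × ℕ))).getD 0).2 ≤ 1 := by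
    intro i _
    cases h : l.idxFun i with
    | none => simp
    | some y =>
      simp only [Option.map_some, Option.getD]
      have := y.2
      simp [hSdef] at this
      rcases this with h | h | h <;> simp [h]
  have hb1 : b.1 ≤ sᶜ.card := by
    rw [hb, Prod.fst_sum]
    calc ∑ i ∈ sᶜ, _ ≤ ∑ _i ∈ sᶜ, 1 := Finset.sum_le_sum (fun i hi => (hbound i hi).1)
    _ = sᶜ.card := by simp
  have hb2 : b.2 ≤ sᶜ.card := by
    rw [hb, Prod.snd_sum]
    calc ∑ i ∈ sᶜ, _ ≤ ∑ _i ∈ sᶜ, 1 := Finset.sum_le_sum (fun i hi => (hbound i hi).2)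
    _ = sᶜ.card := by simp
  have mem0 : ((0,0) : ℕ × ℕ) ∈ (↑S : Set (ℕ × ℕ)) := by simp [hSdef]
  have mem10 : ((1,0) : ℕ × ℕ) ∈ (↑S : Set (ℕ × ℕ)) := by simp [hSdef]
  have mem11 : ((1,1) : ℕ × ℕ) ∈ (↑S : Set (ℕ × ℕ)) := by simp [hSdef]
  have e0 : χ ((∑ i, (((l.idxFun i).getD ⟨(0,0), mem0⟩ : (↑S : Set (ℕ × ℕ))) : ℕ × ℕ)) + (1,1)) = c :=
    hl ⟨(0,0), mem0⟩
  have e10 : χ ((∑ i, (((l.idxFun i).getD ⟨(1,0), mem10⟩ : (↑S : Set (ℕ × ℕ))) : ℕ × ℕ)) + (1,1)) = c :=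
    hl ⟨(1,0), mem10⟩
  have e11 : χ ((∑ i, (((l.idxFun i).getD ⟨(1,1), mem11⟩ : (↑S : Set (ℕ × ℕ))) : ℕ × ℕ)) + (1,1)) = c :=
    hl ⟨(1,1), mem11⟩
  rw [key (0,0) mem0] at e0
  rw [key (1,0) mem10] at e10
  rw [key (1,1) mem11] at e11
  refine ⟨b.1 + 1, b.2 + 1, s.card, Nat.succ_pos _, Nat.succ_pos _, hd, ?_, ?_, ?_, ?_⟩
  · omega
  · omega
  · -- χ (b.1+1, b.2+1) = χ (b.1+1+s.card, b.2+1)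
    rw [show ((b.1+1 : ℕ), (b.2+1 : ℕ)) = s.card • ((0,0) : ℕ × ℕ) + b + (1,1) by
        simp [Prod.ext_iff]; try omega,
      show ((b.1+1+s.card : ℕ), (b.2+1 : ℕ)) = s.card • ((1,0) : ℕ × ℕ) + b + (1,1) by
        simp [Prod.ext_iff]; try omega]
    rw [e0, e10]
  · rw [show ((b.1+1+s.card : ℕ), (b.2+1 : ℕ)) = s.card • ((1,0) : ℕ × ℕ) + b + (1,1) by
        simp [Prod.ext_iff]; try omega,
      show ((b.1+1+s.card : ℕ), (b.2+1+s.card : ℕ)) = s.card • ((1,1) : ℕ × ℕ) + b + (1,1) by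
        simp [Prod.ext_iff]; try omega]
    rw [e10, e11]

def lfreeTable : List (List (Fin 3)) := [
  [1, 0, 1, 0, 1, 1, 2, 2, 0, 2, 2, 2, 0, 0, 1, 2, 0, 1, 0, 0],
  [2, 1, 1, 2, 2, 0, 1, 1, 2, 0, 0, 0, 2, 1, 0, 1, 0, 2, 1, 0],
  [1, 1, 2, 0, 2, 1, 0, 2, 1, 0, 1, 2, 2, 0, 1, 2, 2, 0, 0, 0],
  [0, 2, 2, 0, 2, 0, 1, 1, 2, 0, 1, 2, 0, 2, 1, 2, 1, 0, 1, 0],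
  [2, 2, 0, 1, 0, 0, 1, 0, 1, 2, 0, 2, 1, 1, 2, 0, 0, 1, 0, 1],
  [2, 0, 0, 1, 0, 1, 1, 2, 0, 1, 0, 1, 1, 2, 2, 0, 1, 2, 2, 0],
  [0, 2, 1, 1, 0, 2, 2, 2, 0, 2, 1, 0, 1, 0, 2, 1, 1, 2, 0, 2],
  [0, 1, 0, 2, 1, 1, 2, 0, 0, 1, 2, 0, 2, 1, 1, 1, 2, 1, 0, 2],
  [2, 0, 2, 1, 1, 2, 2, 0, 1, 1, 2, 1, 0, 2, 0, 1, 0, 2, 0, 1],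
  [1, 2, 1, 0, 1, 2, 0, 0, 1, 2, 2, 0, 1, 2, 1, 0, 2, 0, 0, 1],
  [0, 1, 0, 2, 2, 2, 0, 1, 1, 0, 2, 1, 0, 0, 2, 2, 2, 1, 1, 1],
  [2, 0, 2, 1, 2, 0, 0, 1, 2, 2, 0, 0, 1, 1, 0, 2, 1, 2, 0, 2],
  [0, 2, 1, 0, 0, 2, 2, 0, 0, 1, 1, 1, 1, 2, 2, 2, 0, 1, 0, 2],
  [0, 1, 0, 2, 0, 1, 1, 2, 2, 0, 1, 2, 2, 2, 0, 0, 2, 0, 0, 1],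
  [1, 0, 2, 1, 1, 0, 0, 1, 1, 2, 2, 2, 0, 0, 0, 1, 1, 1, 2, 0],
  [2, 2, 1, 0, 0, 0, 2, 1, 2, 1, 0, 0, 0, 1, 1, 1, 2, 2, 1, 2],
  [1, 1, 0, 2, 0, 1, 0, 2, 2, 0, 0, 1, 1, 1, 2, 2, 2, 0, 0, 0],
  [2, 2, 1, 0, 0, 2, 1, 0, 2, 1, 0, 2, 1, 0, 0, 1, 1, 2, 2, 0],
  [1, 1, 0, 2, 2, 1, 0, 2, 1, 0, 2, 1, 0, 2, 1, 1, 2, 2, 0, 0],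
  [0, 0, 2, 1, 1, 0, 2, 1, 0, 2, 1, 0, 2, 1, 0, 2, 2, 0, 0, 1]]

def chi0 : ℕ × ℕ → Fin 3 := fun p => ((lfreeTable.getD (p.1 - 1) []).getD (p.2 - 1) 0)

lemma noL : ¬ HasMonoL 20 chi0 := by
  rintro ⟨x, y, d, hx, hy, hd, hxd, hyd, h1, h2⟩
  have hkey : ∀ x : Fin 20, ∀ y : Fin 20, ∀ d : Fin 20,
      ¬(0 < x.1 ∧ 0 < y.1 ∧ 0 < d.1 ∧ x.1 + d.1 ≤ 20 ∧ y.1 + d.1 ≤ 20 ∧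
        chi0 (x.1, y.1) = chi0 (x.1 + d.1, y.1) ∧
        chi0 (x.1 + d.1, y.1) = chi0 (x.1 + d.1, y.1 + d.1)) := by decide
  exact hkey ⟨x, by omega⟩ ⟨y, by omega⟩ ⟨d, by omega⟩ ⟨hx, hy, hd, hxd, hyd, h1, h2⟩

/-- There exists a 3-coloring of the `20 × 20` grid with no monochromatic L;
consequently `R_3(L) ≥ 21`. -/
theorem exists_L_free_20 :
    (∃ χ : ℕ × ℕ → Fin 3, ¬ HasMonoL 20 χ) ∧ 21 ≤ RL 3 := by
  refine ⟨⟨chi0, noL⟩, ?_⟩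
  apply le_csInf grid_ramsey
  rintro n ⟨hn, hall⟩
  by_contra h
  push_neg at h
  obtain ⟨x, y, d, hx, hy, hd, hxd, hyd, e1, e2⟩ := hall chi0
  exact noL ⟨x, y, d, hx, hy, hd, by omega, by omega, e1, e2⟩
end
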